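/- arXiv:0802.0612 — 2 statements merged into one kernel-verified Lean document; each statement's English description precedes it below -/
import Mathlib

section
/- Let Q ⊂ ℝ^n be a full-dimensional simplicial reflexive polytope, and take the constant weight function a ≡ 1, so that ε_Q = min{ 1+⟨v,u⟩ : u ∈ V(Q), v ∈ V(Q*), u ∉ F_v }. Then (ε_Q − 1)·(|V(Q)| − n) ≤ n. -/
/-!
Let `s` be the sum of the vertices of `Q`. The polar dual `Q*` is compact and contains `0`, so
`⟨·, s⟩` attains a nonpositive minimum on `Q*` at some vertex `v`. Summing `1 + ⟨v, u⟩` over the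
vertices `u` of `Q` gives `|V(Q)| + ⟨v, s⟩ ≤ |V(Q)|`; the `n` vertices of the facet `F_v`
contribute `0` and each of the others at least `ε_Q`, so `ε_Q (|V(Q)| - n) ≤ |V(Q)|`.
-/

open Matrix

/-- The polar dual `Q* = {v | ⟨v,u⟩ ≥ -1 for all u ∈ Q}`. -/
def polarDual {n : ℕ} (Q : Set (Fin n → ℝ)) : Set (Fin n → ℝ) :=
  {v | ∀ u ∈ Q, -1 ≤ v ⬝ᵥ u}

/-- A vector of `ℝ^n` is integral if all its coordinates are integers. -/
def isIntegral {n : ℕ} (u : Fin n → ℝ) : Prop := ∀ i, ∃ z : ℤ, u i = (z : ℝ)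

/-- The set of numbers `a(u)(1 + ⟨v,u⟩)` for `u ∈ V(Q)`, `v ∈ V(Q*)`, `u ∉ F_v`;
`ε_Q` is its minimum. -/
def epsSet {n : ℕ} (VQ VQd : Finset (Fin n → ℝ)) (a : (Fin n → ℝ) → ℝ) : Set ℝ :=
  {x | ∃ u ∈ VQ, ∃ v ∈ VQd, v ⬝ᵥ u ≠ -1 ∧ x = a u * (1 + v ⬝ᵥ u)}

open Finset

/-- The minimisers of `l` form a compact exposed face of `s`; an extreme point of that face
(Krein–Milman) is an extreme point of `s`. -/
theorem IsCompact.exists_mem_extremePoints_isMinOn {E : Type*} [AddCommGroup E] [Module ℝ E]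
    [TopologicalSpace E] [T2Space E] [IsTopologicalAddGroup E] [ContinuousSMul ℝ E]
    [LocallyConvexSpace ℝ E] {s : Set E} (hs : IsCompact s) (hne : s.Nonempty)
    (l : StrongDual ℝ E) : ∃ x ∈ s.extremePoints ℝ, IsMinOn l s x := by
  have hexp : IsExposed ℝ s {y ∈ s | ∀ z ∈ s, (-l) z ≤ (-l) y} := fun _ => ⟨-l, rfl⟩
  obtain ⟨z, hzs, hz⟩ := hs.exists_isMinOn hne l.continuous.continuousOn
  obtain ⟨x, hx⟩ := (hexp.isCompact hs).extremePoints_nonempty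
    ⟨z, hzs, fun y hy => neg_le_neg (hz hy)⟩
  exact ⟨x, hexp.isExtreme.extremePoints_subset_extremePoints hx,
    fun y hy => neg_le_neg_iff.mp (hx.1.2 y hy)⟩

theorem IsCompact.exists_mem_extremePoints_dotProduct_nonpos {ι : Type*} [Fintype ι]
    {K : Set (ι → ℝ)} (hK : IsCompact K) (h0 : 0 ∈ K) (w : ι → ℝ) :
    ∃ v ∈ K.extremePoints ℝ, v ⬝ᵥ w ≤ 0 := by
  obtain ⟨v, hv, hmin⟩ := hK.exists_mem_extremePoints_isMinOn ⟨0, h0⟩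
    (LinearMap.toContinuousLinearMap (dotProductBilin ℝ ℝ w))
  exact ⟨v, hv, by simpa [dotProduct_comm] using hmin h0⟩

theorem isClosed_polarDual {n : ℕ} (Q : Set (Fin n → ℝ)) : IsClosed (polarDual Q) := by
  have : polarDual Q = ⋂ u ∈ Q, {v | -1 ≤ v ⬝ᵥ u} := by ext; simp [polarDual]
  rw [this]
  exact isClosed_biInter fun u _ =>
    isClosed_le continuous_const (continuous_id.dotProduct continuous_const)

theorem polarDual_subset_closedBall {n : ℕ} {Q : Set (Fin n → ℝ)} {δ : ℝ} (hδ : 0 < δ)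
    (hball : Metric.ball 0 δ ⊆ Q) : polarDual Q ⊆ Metric.closedBall 0 (2 / δ) := by
  intro v hv
  rw [mem_closedBall_zero_iff, pi_norm_le_iff_of_nonneg (by positivity)]
  intro j
  have hsingle : ∀ c : ℝ, |c| < δ → -1 ≤ c * v j := fun c hc => by
    have := hv (Pi.single j c) (hball (by simpa [Pi.norm_single] using hc))
    simpa [dotProduct_single, mul_comm] using this
  have hpos := hsingle (δ / 2) (by rw [abs_of_pos (by positivity)]; linarith)
  have hneg := hsingle (-(δ / 2)) (by rw [abs_neg, abs_of_pos (by positivity)]; linarith)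
  rw [Real.norm_eq_abs, abs_le, neg_le, le_div_iff₀ hδ, le_div_iff₀ hδ]
  constructor <;> nlinarith

theorem isCompact_polarDual {n : ℕ} {Q : Set (Fin n → ℝ)} (h0 : 0 ∈ interior Q) :
    IsCompact (polarDual Q) := by
  obtain ⟨δ, hδ, hball⟩ := Metric.mem_nhds_iff.mp (mem_interior_iff_mem_nhds.mp h0)
  exact Metric.isCompact_of_isClosed_isBounded (isClosed_polarDual Q)
    (Metric.isBounded_closedBall.subset (polarDual_subset_closedBall hδ hball))

theorem zero_mem_polarDual {n : ℕ} (Q : Set (Fin n → ℝ)) : 0 ∈ polarDual Q :=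
  fun _ _ => by simp

theorem mul_card_sub_card_facet_le_card {ι : Type*} [Fintype ι] (S : Finset (ι → ℝ))
    (v : ι → ℝ) (ε : ℝ)
    (hε : ∀ u ∈ S, v ⬝ᵥ u ≠ -1 → ε ≤ 1 + v ⬝ᵥ u) (hv : v ⬝ᵥ ∑ u ∈ S, u ≤ 0) :
    ε * (#S - #(S.filter fun u => v ⬝ᵥ u = -1)) ≤ #S := by
  have hcard : (#S - #(S.filter fun u => v ⬝ᵥ u = -1) : ℝ) =
      #(S.filter fun u => v ⬝ᵥ u ≠ -1) := by
    rw [← card_filter_add_card_filter_not (fun u => v ⬝ᵥ u = -1)]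
    push_cast
    ring
  have hfacet : ∑ u ∈ S.filter (fun u => v ⬝ᵥ u = -1), (1 + v ⬝ᵥ u) = 0 :=
    sum_eq_zero fun u hu => by rw [(mem_filter.mp hu).2]; ring
  calc ε * (#S - #(S.filter fun u => v ⬝ᵥ u = -1))
      = ∑ _u ∈ S.filter (fun u => v ⬝ᵥ u ≠ -1), ε := by
        rw [hcard, sum_const, nsmul_eq_mul, mul_comm]
    _ ≤ ∑ u ∈ S.filter (fun u => v ⬝ᵥ u ≠ -1), (1 + v ⬝ᵥ u) :=
        sum_le_sum fun u hu => hε u (mem_filter.mp hu).1 (mem_filter.mp hu).2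
    _ = ∑ u ∈ S, (1 + v ⬝ᵥ u) := by
        rw [← sum_filter_add_sum_filter_not S (fun u => v ⬝ᵥ u = -1), hfacet, zero_add]
    _ = #S + v ⬝ᵥ ∑ u ∈ S, u := by simp [sum_add_distrib, dotProduct_sum]
    _ ≤ #S := by linarith

theorem eps_reflexive_inequality_general {n : ℕ}
    (VQ VQd : Finset (Fin n → ℝ))
    -- `0` lies in the interior of `Q` (in particular `Q` is full-dimensional)
    (h0 : (0 : Fin n → ℝ) ∈ interior (convexHull ℝ (VQ : Set (Fin n → ℝ))))
    -- `VQd` is the vertex set of the polar dual `Q*`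
    (hVQd : (VQd : Set (Fin n → ℝ)) =
      Set.extremePoints ℝ (polarDual (convexHull ℝ (VQ : Set (Fin n → ℝ)))))
    -- `Q` is simplicial: every facet has exactly `n` vertices
    (hsimp : ∀ v ∈ VQd, (VQ.filter fun u => v ⬝ᵥ u = -1).card = n)
    -- `ε` is the minimum `ε_Q` for the constant weight `a ≡ 1`
    (ε : ℝ) (hε : IsLeast (epsSet VQ VQd fun _ => 1) ε) :
    (ε - 1) * ((VQ.card : ℝ) - n) ≤ n := by
  obtain ⟨v, hv, hvs⟩ := (isCompact_polarDual h0).exists_mem_extremePoints_dotProduct_nonpos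
    (zero_mem_polarDual _) (∑ u ∈ VQ, u)
  rw [← hVQd, Finset.mem_coe] at hv
  have hεv : ∀ u ∈ VQ, v ⬝ᵥ u ≠ -1 → ε ≤ 1 + v ⬝ᵥ u := fun u hu hne => by
    simpa using hε.2 ⟨u, hu, v, hv, hne, rfl⟩
  have hmain := mul_card_sub_card_facet_le_card VQ v ε hεv hvs
  rw [hsimp v hv] at hmain
  linarith

/-- For a full-dimensional simplicial reflexive polytope `Q ⊂ ℝ^n`, with the
constant weight `a ≡ 1`, one has `(ε_Q - 1) · (|V(Q)| - n) ≤ n`. -/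
theorem eps_reflexive_inequality {n : ℕ} (hn : 1 ≤ n)
    (VQ VQd : Finset (Fin n → ℝ))
    -- `VQ` is the vertex set of the polytope `Q = conv(VQ)`
    (hVQ : (VQ : Set (Fin n → ℝ)) =
      Set.extremePoints ℝ (convexHull ℝ (VQ : Set (Fin n → ℝ))))
    -- `0` lies in the interior of `Q` (in particular `Q` is full-dimensional)
    (h0 : (0 : Fin n → ℝ) ∈ interior (convexHull ℝ (VQ : Set (Fin n → ℝ))))
    -- `VQd` is the vertex set of the polar dual `Q*`
    (hVQd : (VQd : Set (Fin n → ℝ)) =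
      Set.extremePoints ℝ (polarDual (convexHull ℝ (VQ : Set (Fin n → ℝ)))))
    -- `Q` is simplicial: every facet has exactly `n` vertices
    (hsimp : ∀ v ∈ VQd, (VQ.filter fun u => v ⬝ᵥ u = -1).card = n)
    -- `Q` is reflexive: vertices of `Q` and of `Q*` are lattice points
    (hrefl : ∀ u ∈ VQ, isIntegral u) (hrefld : ∀ v ∈ VQd, isIntegral v)
    -- `ε` is the minimum `ε_Q` for the constant weight `a ≡ 1`
    (ε : ℝ) (hε : IsLeast (epsSet VQ VQd fun _ => 1) ε) :
    (ε - 1) * ((VQ.card : ℝ) - n) ≤ n :=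
  eps_reflexive_inequality_general VQ VQd h0 hVQd hsimp ε hε
end

section
/- Let Q ⊂ ℝ^n be a full-dimensional simplicial reflexive polytope with constant weight function a ≡ 1, satisfying Condition (1'): for every u ∈ V(Q) and v ∈ V(Q*), 1+⟨v,u⟩ equals either 0 or ε_Q. If there exists a facet of Q whose n vertices do not form a ℤ-basis of ℤ^n, then ι_Q < ε_Q. Equivalently: if Condition (1') holds and ι_Q = ε_Q, then the vertex set of every facet of Q is a ℤ-basis of ℤ^n (i.e. the associated toric Fano variety is locally factorial). -/
open Matrix

/-- A vector of `(ℝ^n)*` is a primitive element of the dual lattice `(ℤ^n)*` if its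
coordinates are integers whose gcd is `1`. -/
def isPrimitive {n : ℕ} (χ : Fin n → ℝ) : Prop :=
  ∃ c : Fin n → ℤ, (∀ i, χ i = (c i : ℝ)) ∧ Finset.univ.gcd c = 1

/-- The set of numbers `(1 + ⟨v,u⟩)/⟨χ_μ,u⟩` over all `(n-2)`-dimensional faces `μ` of the
simplicial reflexive polytope `Q` and both orderings `(F_v, F_{v'})` of the two facets of `Q`
containing `μ`; here `u` is the unique vertex of `F_{v'}` not lying in `μ` (encoded as: `u` is
a vertex of `F_{v'}` not in `F_v`, and all other vertices of `F_{v'}` lie in `F_v`), and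
`χ_μ` is the primitive element of `(ℤ^n)*` vanishing on the linear span of `μ` (i.e. on all
vertices of `F_{v'}` other than `u`) with `⟨χ_μ,u⟩ > 0`.  `ι_Q` is its minimum. -/
def iotaSet {n : ℕ} (VQ VQd : Finset (Fin n → ℝ)) : Set ℝ :=
  {x | ∃ v ∈ VQd, ∃ v' ∈ VQd, v ≠ v' ∧ ∃ u ∈ VQ,
    v' ⬝ᵥ u = -1 ∧ v ⬝ᵥ u ≠ -1 ∧
    (∀ w ∈ VQ, v' ⬝ᵥ w = -1 → w ≠ u → v ⬝ᵥ w = -1) ∧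
    ∃ χ : Fin n → ℝ, isPrimitive χ ∧
      (∀ w ∈ VQ, v' ⬝ᵥ w = -1 → w ≠ u → χ ⬝ᵥ w = 0) ∧
      0 < χ ⬝ᵥ u ∧ x = (1 + v ⬝ᵥ u) / (χ ⬝ᵥ u)}

/-! If `ε_Q ≤ ι_Q`, fix a facet `F_v` with vertices `u_1, …, u_n`. They are linearly independent,
since otherwise `v` could be moved in two opposite directions inside `Q*`; so for each `i` there is
a primitive integral `χ_i` vanishing on the `u_j`, `j ≠ i`, with `⟨χ_i, u_i⟩ > 0`. Moving `v` in
the direction `χ_i` stays in `Q*` and leaves the compact face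
`{w ∈ Q* | ⟨w, u_j⟩ = -1 for j ≠ i}`, so by Krein–Milman this face has a vertex `v'` with
`⟨v', u_i⟩ > -1`: the facet `F_{v'}` is the neighbour of `F_v` across the ridge. Condition (1')
gives `1 + ⟨v', u_i⟩ = ε_Q`, hence `ε_Q ≤ ι_Q ≤ ε_Q / ⟨χ_i, u_i⟩` forces the positive integer
`⟨χ_i, u_i⟩` to be `1`. The `χ_i` are then an integral dual basis of the `u_i`, which therefore
generate `ℤ^n`. -/

open Filter Topology

section PolarDual

variable {n : ℕ}

lemma mem_polarDual_convexHull_iff {S : Set (Fin n → ℝ)} {w : Fin n → ℝ} :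
    w ∈ polarDual (convexHull ℝ S) ↔ ∀ u ∈ S, -1 ≤ w ⬝ᵥ u :=
  ⟨fun h u hu => h u (subset_convexHull ℝ S hu), fun h _ hu =>
    convexHull_min h (convex_halfSpace_ge (dotProductBilin ℝ ℝ w).isLinear (-1)) hu⟩

lemma isBounded_polarDual {Q : Set (Fin n → ℝ)} (h0 : 0 ∈ interior Q) :
    Bornology.IsBounded (polarDual Q) := by
  obtain ⟨r, hr, hball⟩ := Metric.mem_nhds_iff.1 (mem_interior_iff_mem_nhds.1 h0)
  have hmem : ∀ (c : ℝ) (k : Fin n), |c| < r → c • Pi.single k 1 ∈ Q := fun c k hc =>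
    hball (by simpa [norm_smul, Pi.norm_single] using hc)
  rw [isBounded_iff_forall_norm_le]
  refine ⟨2 / r, fun w hw => (pi_norm_le_iff_of_nonneg (by positivity)).2 fun k => ?_⟩
  have hdot (c : ℝ) : w ⬝ᵥ (c • Pi.single k 1) = c * w k := by simp
  have h₁ := hw _ (hmem (r / 2) k (by rw [abs_of_pos (by positivity)]; linarith))
  have h₂ := hw _ (hmem (-(r / 2)) k (by rw [abs_neg, abs_of_pos (by positivity)]; linarith))
  rw [hdot] at h₁ h₂
  rw [Real.norm_eq_abs, abs_le', le_div_iff₀ hr, le_div_iff₀ hr]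
  constructor <;> linarith

def dualFace (Q P : Set (Fin n → ℝ)) : Set (Fin n → ℝ) :=
  {w ∈ polarDual Q | ∀ u ∈ P, w ⬝ᵥ u = -1}

lemma isClosed_dualFace (Q P : Set (Fin n → ℝ)) : IsClosed (dualFace Q P) := by
  have hdot (u : Fin n → ℝ) : Continuous (· ⬝ᵥ u : (Fin n → ℝ) → ℝ) :=
    continuous_id.dotProduct continuous_const
  have : dualFace Q P = (⋂ u ∈ Q, {w | -1 ≤ w ⬝ᵥ u}) ∩ ⋂ u ∈ P, {w | w ⬝ᵥ u = -1} := by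
    ext; simp [dualFace, polarDual]
  rw [this]
  exact (isClosed_biInter fun u _ => isClosed_le continuous_const (hdot u)).inter
    (isClosed_biInter fun u _ => isClosed_eq (hdot u) continuous_const)

lemma convex_dualFace (Q P : Set (Fin n → ℝ)) : Convex ℝ (dualFace Q P) := by
  rintro x ⟨hxQ, hxP⟩ y ⟨hyQ, hyP⟩ a b ha hb hab
  refine ⟨fun u hu => ?_, fun u hu => ?_⟩
  · rw [add_dotProduct, smul_dotProduct, smul_dotProduct, smul_eq_mul, smul_eq_mul]
    nlinarith [hxQ u hu, hyQ u hu]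
  · rw [add_dotProduct, smul_dotProduct, smul_dotProduct, smul_eq_mul, smul_eq_mul, hxP u hu,
      hyP u hu]
    linarith

lemma isExtreme_dualFace {Q P : Set (Fin n → ℝ)} (hPQ : P ⊆ Q) :
    IsExtreme ℝ (polarDual Q) (dualFace Q P) := by
  refine ⟨fun w hw => hw.1, fun x hx y hy _ hz ⟨a, b, ha, hb, hab, hxy⟩ => ⟨hx, fun u hu => ?_⟩⟩
  have h := hz.2 u hu
  rw [← hxy, add_dotProduct, smul_dotProduct, smul_dotProduct, smul_eq_mul, smul_eq_mul] at h
  nlinarith [hx u (hPQ hu), hy u (hPQ hu)]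

end PolarDual

lemma IsCompact.exists_mem_extremePoints_lt {E : Type*} [AddCommGroup E] [Module ℝ E]
    [TopologicalSpace E] [T2Space E] [IsTopologicalAddGroup E] [ContinuousSMul ℝ E]
    [LocallyConvexSpace ℝ E] {A : Set E} (hA : IsCompact A) (hAconv : Convex ℝ A) {f : E → ℝ}
    (hf : IsLinearMap ℝ f) (hfc : Continuous f) {x : E} (hx : x ∈ A) {c : ℝ} (hc : c < f x) :
    ∃ e ∈ A.extremePoints ℝ, c < f e := by
  by_contra! h
  have hA_le : A ⊆ {y | f y ≤ c} := by
    rw [← closure_convexHull_extremePoints hA hAconv]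
    exact closure_minimal (convexHull_min h (convex_halfSpace_le hf c))
      (isClosed_le hfc continuous_const)
  exact (hA_le hx).not_gt hc

section Lattice

variable {n : ℕ}

lemma Int.exists_gcd_eq_one_smul {ι : Type*} [Fintype ι] {c₀ : ι → ℤ} (hc₀ : c₀ ≠ 0) :
    ∃ g : ℤ, 0 < g ∧ ∃ c : ι → ℤ, Finset.univ.gcd c = 1 ∧ c₀ = g • c := by
  obtain ⟨k₀, hk₀⟩ := Function.ne_iff.1 hc₀
  obtain ⟨c, hc, hgcd⟩ := Finset.univ.extract_gcd c₀ ⟨k₀, Finset.mem_univ k₀⟩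
  refine ⟨_, ?_, c, hgcd, funext fun k => hc k (Finset.mem_univ k)⟩
  refine lt_of_le_of_ne (Int.nonneg_of_normalize_eq_self Finset.normalize_gcd) (Ne.symm ?_)
  rw [Ne, Finset.gcd_eq_zero_iff]
  exact fun h => hk₀ (h k₀ (Finset.mem_univ k₀))

lemma Matrix.exists_gcd_eq_one_mulVec_eq_single (Z : Matrix (Fin n) (Fin n) ℤ) (hZ : Z.det ≠ 0)
    (i : Fin n) :
    ∃ c : Fin n → ℤ, Finset.univ.gcd c = 1 ∧ ∃ m > 0, Z *ᵥ c = Pi.single i m := by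
  have hadj : Z *ᵥ (Z.adjugate *ᵥ Pi.single i Z.det) = Pi.single i (Z.det * Z.det) := by
    rw [mulVec_mulVec, mul_adjugate, smul_mulVec, one_mulVec, ← Pi.single_smul, smul_eq_mul]
  obtain ⟨g, hg, c, hgcd, hc⟩ := Int.exists_gcd_eq_one_smul (c₀ := Z.adjugate *ᵥ Pi.single i Z.det)
    fun h => by simpa [h, hZ] using congrFun hadj i
  rw [hc, mulVec_smul] at hadj
  refine ⟨c, hgcd, (Z *ᵥ c) i, ?_, funext fun j => ?_⟩
  · have := congrFun hadj i
    simp only [Pi.smul_apply, Pi.single_eq_same, smul_eq_mul] at this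
    exact pos_of_mul_pos_right (this ▸ mul_self_pos.2 hZ) hg.le
  · rcases eq_or_ne j i with rfl | hj
    · rw [Pi.single_eq_same]
    · have := congrFun hadj j
      simp only [Pi.smul_apply, Pi.single_eq_of_ne hj, smul_eq_mul, mul_eq_zero] at this
      rw [Pi.single_eq_of_ne hj]
      exact this.resolve_left hg.ne'

lemma span_int_range_eq_of_mul_eq_one {R : Type*} [Ring R] {u : Fin n → Fin n → R}
    {Z C : Matrix (Fin n) (Fin n) ℤ} (hu : ∀ j k, u j k = Z j k) (h : Z * C = 1) :
    Submodule.span ℤ (Set.range u) = Submodule.span ℤ (Set.range fun k => Pi.single k 1) := by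
  have hrow : ∀ j, u j = ∑ k, Z j k • (Pi.single k 1 : Fin n → R) := fun j => by
    ext l
    simp [hu, Pi.single_apply]
  have hsingle : ∀ k, (Pi.single k 1 : Fin n → R) = ∑ j, C k j • u j := fun k => by
    ext l
    have := congrArg (fun M : Matrix (Fin n) (Fin n) ℤ => (M k l : R)) (mul_eq_one_comm.1 h)
    simp only [mul_apply, one_apply, Int.cast_sum, Int.cast_mul] at this
    simp [hu, Pi.single_apply, this, eq_comm]
  refine le_antisymm (Submodule.span_le.2 ?_) (Submodule.span_le.2 ?_) <;> rintro _ ⟨j, rfl⟩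
  · exact (Submodule.mem_span_range_iff_exists_fun ℤ).2 ⟨_, (hrow j).symm⟩
  · exact (Submodule.mem_span_range_iff_exists_fun ℤ).2 ⟨_, (hsingle j).symm⟩

lemma intCast_dotProduct_eq_mulVec {u : Fin n → Fin n → ℝ} {Z : Matrix (Fin n) (Fin n) ℤ}
    (hZ : ∀ j k, u j k = Z j k) (c : Fin n → ℤ) (j : Fin n) :
    (fun k => (c k : ℝ)) ⬝ᵥ u j = ((Z *ᵥ c) j : ℝ) := by
  simp [mulVec, dotProduct, hZ, mul_comm]

end Lattice

section Polytope

variable {n : ℕ} {S : Finset (Fin n → ℝ)}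

lemma eventually_add_smul_mem_polarDual {v ξ : Fin n → ℝ}
    (hv : v ∈ polarDual (convexHull ℝ (S : Set (Fin n → ℝ))))
    (hξ : ∀ u ∈ S, v ⬝ᵥ u = -1 → 0 ≤ ξ ⬝ᵥ u) :
    ∀ᶠ t in 𝓝[>] (0 : ℝ), v + t • ξ ∈ polarDual (convexHull ℝ (S : Set (Fin n → ℝ))) := by
  simp_rw [mem_polarDual_convexHull_iff, Finset.mem_coe, eventually_all_finset, add_dotProduct,
    smul_dotProduct, smul_eq_mul]
  intro u hu
  rcases (mem_polarDual_convexHull_iff.1 hv u hu).eq_or_lt with hvu | hvu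
  · filter_upwards [self_mem_nhdsWithin] with t (ht : 0 < t)
    nlinarith [hξ u hu hvu.symm]
  · have hlim : Tendsto (fun t : ℝ => v ⬝ᵥ u + t * (ξ ⬝ᵥ u)) (𝓝 0) (𝓝 (v ⬝ᵥ u)) := by
      simpa using ((tendsto_id (x := 𝓝 (0 : ℝ))).mul_const (ξ ⬝ᵥ u)).const_add (v ⬝ᵥ u)
    exact nhdsWithin_le_nhds (hlim.eventually (eventually_ge_nhds hvu))

lemma eq_zero_of_forall_dotProduct_eq_zero_of_mem_extremePoints {v ξ : Fin n → ℝ}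
    (hv : v ∈ (polarDual (convexHull ℝ (S : Set (Fin n → ℝ)))).extremePoints ℝ)
    (hξ : ∀ u ∈ S, v ⬝ᵥ u = -1 → ξ ⬝ᵥ u = 0) : ξ = 0 := by
  have hplus := eventually_add_smul_mem_polarDual hv.1 fun u hu hvu => (hξ u hu hvu).ge
  have hminus := eventually_add_smul_mem_polarDual (ξ := -ξ) hv.1 fun u hu hvu => by
    rw [neg_dotProduct, hξ u hu hvu, neg_zero]
  obtain ⟨t, h₁, h₂, ht⟩ := (hplus.and (hminus.and self_mem_nhdsWithin)).exists
  have hseg : v ∈ openSegment ℝ (v + t • ξ) (v + t • -ξ) :=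
    ⟨1 / 2, 1 / 2, by norm_num, by norm_num, by norm_num, by module⟩
  have h := hv.2 h₁ h₂ hseg
  rw [add_eq_left, smul_eq_zero] at h
  exact h.resolve_left (ne_of_gt ht)

lemma exists_mem_extremePoints_polarDual_adjacent
    (h0 : (0 : Fin n → ℝ) ∈ interior (convexHull ℝ (S : Set (Fin n → ℝ))))
    {v ξ u₀ : Fin n → ℝ} (hv : v ∈ polarDual (convexHull ℝ (S : Set (Fin n → ℝ))))
    (hu₀ : u₀ ∈ S) (hξu₀ : 0 < ξ ⬝ᵥ u₀) (hξ : ∀ u ∈ S, v ⬝ᵥ u = -1 → u ≠ u₀ → ξ ⬝ᵥ u = 0) :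
    ∃ e ∈ (polarDual (convexHull ℝ (S : Set (Fin n → ℝ)))).extremePoints ℝ,
      -1 < e ⬝ᵥ u₀ ∧ ∀ u ∈ S, v ⬝ᵥ u = -1 → u ≠ u₀ → e ⬝ᵥ u = -1 := by
  set P : Set (Fin n → ℝ) := {u | u ∈ S ∧ v ⬝ᵥ u = -1 ∧ u ≠ u₀}
  have hPQ : P ⊆ convexHull ℝ (S : Set (Fin n → ℝ)) := fun u hu => subset_convexHull ℝ _ hu.1
  have hξ_nonneg : ∀ u ∈ S, v ⬝ᵥ u = -1 → 0 ≤ ξ ⬝ᵥ u := fun u hu hvu => by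
    rcases eq_or_ne u u₀ with rfl | hne
    exacts [hξu₀.le, (hξ u hu hvu hne).ge]
  obtain ⟨t, hvt, ht⟩ := ((eventually_add_smul_mem_polarDual hv hξ_nonneg).and
    self_mem_nhdsWithin).exists
  have hvt_face : v + t • ξ ∈ dualFace _ P := ⟨hvt, fun u ⟨hu, hvu, hne⟩ => by
    rw [add_dotProduct, smul_dotProduct, hξ u hu hvu hne, hvu, smul_zero, add_zero]⟩
  have hvt_u₀ : -1 < (v + t • ξ) ⬝ᵥ u₀ := by
    rw [add_dotProduct, smul_dotProduct, smul_eq_mul]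
    nlinarith [mem_polarDual_convexHull_iff.1 hv u₀ hu₀, mul_pos (ht : 0 < t) hξu₀]
  have hcompact : IsCompact (dualFace (convexHull ℝ (S : Set (Fin n → ℝ))) P) :=
    Metric.isCompact_of_isClosed_isBounded (isClosed_dualFace _ _)
      ((isBounded_polarDual h0).subset fun _ hw => hw.1)
  obtain ⟨e, he, he_u₀⟩ := hcompact.exists_mem_extremePoints_lt (convex_dualFace _ _)
    ⟨fun x y => add_dotProduct x y u₀, fun c x => smul_dotProduct c x u₀⟩
    (continuous_id.dotProduct continuous_const) hvt_face hvt_u₀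
  exact ⟨e, (isExtreme_dualFace hPQ).extremePoints_subset_extremePoints he, he_u₀,
    fun u hu hvu hne => (extremePoints_subset he).2 u ⟨hu, hvu, hne⟩⟩

lemma det_ne_zero_of_range_eq_facet
    {v : Fin n → ℝ} {u : Fin n → Fin n → ℝ} {Z : Matrix (Fin n) (Fin n) ℤ}
    (hv : v ∈ (polarDual (convexHull ℝ (S : Set (Fin n → ℝ)))).extremePoints ℝ)
    (hu : Set.range u = S.filter fun w => v ⬝ᵥ w = -1) (hZ : ∀ j k, u j k = Z j k) :
    Z.det ≠ 0 := by
  intro hdet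
  obtain ⟨c, hc, hZc⟩ := Matrix.exists_mulVec_eq_zero_iff.2 hdet
  have hc_perp := eq_zero_of_forall_dotProduct_eq_zero_of_mem_extremePoints hv
    (ξ := fun k => (c k : ℝ)) fun w hw hvw => by
      obtain ⟨j, rfl⟩ : w ∈ Set.range u := by simp [hu, hw, hvw]
      simp [intCast_dotProduct_eq_mulVec hZ, hZc]
  exact hc (funext fun k => by simpa using congrFun hc_perp k)

end Polytope

section ReflexivePolytope

variable {n : ℕ} {VQ VQd : Finset (Fin n → ℝ)} {ε ι : ℝ} {v : Fin n → ℝ}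

lemma dotProduct_le_one_of_eps_le_iota
    (h0 : (0 : Fin n → ℝ) ∈ interior (convexHull ℝ (VQ : Set (Fin n → ℝ))))
    (hVQd : (VQd : Set (Fin n → ℝ)) =
      Set.extremePoints ℝ (polarDual (convexHull ℝ (VQ : Set (Fin n → ℝ)))))
    (hcond : ∀ u ∈ VQ, ∀ v ∈ VQd, 1 + v ⬝ᵥ u = 0 ∨ 1 + v ⬝ᵥ u = ε)
    (hι : IsLeast (iotaSet VQ VQd) ι) (hle : ε ≤ ι)
    {u₀ χ : Fin n → ℝ} (hv : v ∈ VQd) (hu₀ : u₀ ∈ VQ) (hvu₀ : v ⬝ᵥ u₀ = -1)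
    (hχ : isPrimitive χ) (hχu₀ : 0 < χ ⬝ᵥ u₀)
    (hχ0 : ∀ w ∈ VQ, v ⬝ᵥ w = -1 → w ≠ u₀ → χ ⬝ᵥ w = 0) :
    χ ⬝ᵥ u₀ ≤ 1 := by
  have hvQ : v ∈ polarDual (convexHull ℝ (VQ : Set (Fin n → ℝ))) :=
    extremePoints_subset (hVQd ▸ Finset.mem_coe.2 hv)
  obtain ⟨e, he, heu₀, he_ridge⟩ :=
    exists_mem_extremePoints_polarDual_adjacent h0 hvQ hu₀ hχu₀ hχ0
  rw [← hVQd, Finset.mem_coe] at he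
  have hε : 1 + e ⬝ᵥ u₀ = ε := (hcond u₀ hu₀ e he).resolve_left (by linarith)
  have hne : e ≠ v := by
    rintro rfl
    linarith
  have hmem : ε / (χ ⬝ᵥ u₀) ∈ iotaSet VQ VQd :=
    ⟨e, he, v, hv, hne, u₀, hu₀, hvu₀, heu₀.ne', he_ridge, χ, hχ, hχ0, hχu₀, by rw [hε]⟩
  have hε_le : ε ≤ ε / (χ ⬝ᵥ u₀) := hle.trans (hι.2 hmem)
  rw [le_div_iff₀ hχu₀] at hε_le
  nlinarith

lemma exists_mulVec_eq_single_of_eps_le_iota {u : Fin n → Fin n → ℝ}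
    {Z : Matrix (Fin n) (Fin n) ℤ}
    (h0 : (0 : Fin n → ℝ) ∈ interior (convexHull ℝ (VQ : Set (Fin n → ℝ))))
    (hVQd : (VQd : Set (Fin n → ℝ)) =
      Set.extremePoints ℝ (polarDual (convexHull ℝ (VQ : Set (Fin n → ℝ)))))
    (hcond : ∀ u ∈ VQ, ∀ v ∈ VQd, 1 + v ⬝ᵥ u = 0 ∨ 1 + v ⬝ᵥ u = ε)
    (hι : IsLeast (iotaSet VQ VQd) ι) (hle : ε ≤ ι) (hv : v ∈ VQd)
    (hu : Set.range u = VQ.filter fun w => v ⬝ᵥ w = -1) (hZ : ∀ j k, u j k = Z j k)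
    (hdet : Z.det ≠ 0) (i : Fin n) :
    ∃ c : Fin n → ℤ, Z *ᵥ c = Pi.single i 1 := by
  have hface : u i ∈ VQ ∧ v ⬝ᵥ u i = -1 := by
    simpa using hu.subset (Set.mem_range_self i)
  obtain ⟨c, hgcd, m, hm, hZc⟩ := Z.exists_gcd_eq_one_mulVec_eq_single hdet i
  have hχ := intCast_dotProduct_eq_mulVec hZ c
  rw [hZc] at hχ
  have hle_one := dotProduct_le_one_of_eps_le_iota h0 hVQd hcond hι hle hv hface.1 hface.2
    ⟨c, fun _ => rfl, hgcd⟩ (by simpa [hχ] using hm) fun w hw hvw hne => by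
      obtain ⟨j, rfl⟩ : w ∈ Set.range u := by simp [hu, hw, hvw]
      simp [hχ, show j ≠ i by rintro rfl; exact hne rfl]
  rw [hχ, Pi.single_eq_same] at hle_one
  have hm_one : m = 1 := le_antisymm (by exact_mod_cast hle_one) hm
  exact ⟨c, hm_one ▸ hZc⟩

lemma span_facet_eq_of_eps_le_iota
    (h0 : (0 : Fin n → ℝ) ∈ interior (convexHull ℝ (VQ : Set (Fin n → ℝ))))
    (hVQd : (VQd : Set (Fin n → ℝ)) =
      Set.extremePoints ℝ (polarDual (convexHull ℝ (VQ : Set (Fin n → ℝ)))))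
    (hrefl : ∀ u ∈ VQ, isIntegral u)
    (hcond : ∀ u ∈ VQ, ∀ v ∈ VQd, 1 + v ⬝ᵥ u = 0 ∨ 1 + v ⬝ᵥ u = ε)
    (hι : IsLeast (iotaSet VQ VQd) ι) (hle : ε ≤ ι) (hv : v ∈ VQd)
    (hcard : (VQ.filter fun u => v ⬝ᵥ u = -1).card = n) :
    Submodule.span ℤ ((VQ.filter fun u => v ⬝ᵥ u = -1 : Finset (Fin n → ℝ)) :
        Set (Fin n → ℝ)) =
      Submodule.span ℤ (Set.range fun i => (Pi.single i 1 : Fin n → ℝ)) := by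
  set F := VQ.filter fun u => v ⬝ᵥ u = -1
  set u : Fin n → Fin n → ℝ := fun j => ((F.equivFin.trans (finCongr hcard)).symm j : _)
  have hu : Set.range u = F := by
    rw [show u = Subtype.val ∘ _ from rfl, Set.range_comp, Equiv.range_eq_univ, Set.image_univ,
      Subtype.range_coe]
  choose Z hZ using fun j => hrefl (u j) (Finset.mem_filter.1 (hu.subset ⟨j, rfl⟩)).1
  have hdet : Matrix.det (Matrix.of Z) ≠ 0 :=
    det_ne_zero_of_range_eq_facet (hVQd ▸ Finset.mem_coe.2 hv) hu hZ
  choose C hC using exists_mulVec_eq_single_of_eps_le_iota h0 hVQd hcond hι hle hv hu hZ hdet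
  rw [← hu]
  refine span_int_range_eq_of_mul_eq_one hZ (C := (Matrix.of C)ᵀ) ?_
  ext j i
  rw [one_apply, ← Pi.single_apply, ← hC i]
  rfl

end ReflexivePolytope

theorem condition1'_not_locally_factorial_implies_iota_lt_eps_general {n : ℕ}
    (VQ VQd : Finset (Fin n → ℝ))
    -- `0` lies in the interior of `Q` (in particular `Q` is full-dimensional)
    (h0 : (0 : Fin n → ℝ) ∈ interior (convexHull ℝ (VQ : Set (Fin n → ℝ))))
    -- `VQd` is the vertex set of the polar dual `Q*`
    (hVQd : (VQd : Set (Fin n → ℝ)) =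
      Set.extremePoints ℝ (polarDual (convexHull ℝ (VQ : Set (Fin n → ℝ)))))
    -- `Q` is simplicial: every facet has exactly `n` vertices
    (hsimp : ∀ v ∈ VQd, (VQ.filter fun u => v ⬝ᵥ u = -1).card = n)
    -- `Q` is reflexive: vertices of `Q` and of `Q*` are lattice points
    (hrefl : ∀ u ∈ VQ, isIntegral u)
    -- `ε` is the minimum `ε_Q` for the constant weight `a ≡ 1`
    (ε : ℝ)
    -- Condition (1')
    (hcond : ∀ u ∈ VQ, ∀ v ∈ VQd, 1 + v ⬝ᵥ u = 0 ∨ 1 + v ⬝ᵥ u = ε)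
    -- `ι` is the pseudo-index `ι_Q`
    (ι : ℝ) (hι : IsLeast (iotaSet VQ VQd) ι)
    -- some facet of `Q` has vertex set which is not a `ℤ`-basis of `ℤ^n`: its `ℤ`-span is
    -- not the standard lattice (the `ℤ`-span of the standard basis of `ℝ^n`)
    (hbad : ∃ v ∈ VQd,
      Submodule.span ℤ ((VQ.filter fun u => v ⬝ᵥ u = -1 : Finset (Fin n → ℝ)) :
          Set (Fin n → ℝ)) ≠
        Submodule.span ℤ (Set.range fun i => (Pi.single i 1 : Fin n → ℝ))) :
    ι < ε := by
  by_contra! hle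
  obtain ⟨v, hv, hspan⟩ := hbad
  exact hspan (span_facet_eq_of_eps_le_iota h0 hVQd hrefl hcond hι hle hv (hsimp v hv))

/-- Let `Q ⊂ ℝ^n` be a full-dimensional simplicial reflexive polytope with
constant weight `a ≡ 1`, satisfying Condition (1'): `1 + ⟨v,u⟩ ∈ {0, ε_Q}` for all
`u ∈ V(Q)`, `v ∈ V(Q*)`.  If some facet of `Q` has vertex set which is not a `ℤ`-basis of
`ℤ^n` (i.e. whose `ℤ`-span is not the full lattice `ℤ^n ⊂ ℝ^n`), then `ι_Q < ε_Q`. -/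
theorem condition1'_not_locally_factorial_implies_iota_lt_eps {n : ℕ} (hn : 1 ≤ n)
    (VQ VQd : Finset (Fin n → ℝ))
    -- `VQ` is the vertex set of the polytope `Q = conv(VQ)`
    (hVQ : (VQ : Set (Fin n → ℝ)) =
      Set.extremePoints ℝ (convexHull ℝ (VQ : Set (Fin n → ℝ))))
    -- `0` lies in the interior of `Q` (in particular `Q` is full-dimensional)
    (h0 : (0 : Fin n → ℝ) ∈ interior (convexHull ℝ (VQ : Set (Fin n → ℝ))))
    -- `VQd` is the vertex set of the polar dual `Q*`
    (hVQd : (VQd : Set (Fin n → ℝ)) =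
      Set.extremePoints ℝ (polarDual (convexHull ℝ (VQ : Set (Fin n → ℝ)))))
    -- `Q` is simplicial: every facet has exactly `n` vertices
    (hsimp : ∀ v ∈ VQd, (VQ.filter fun u => v ⬝ᵥ u = -1).card = n)
    -- `Q` is reflexive: vertices of `Q` and of `Q*` are lattice points
    (hrefl : ∀ u ∈ VQ, isIntegral u) (hrefld : ∀ v ∈ VQd, isIntegral v)
    -- `ε` is the minimum `ε_Q` for the constant weight `a ≡ 1`
    (ε : ℝ) (hε : IsLeast (epsSet VQ VQd fun _ => 1) ε)
    -- Condition (1')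
    (hcond : ∀ u ∈ VQ, ∀ v ∈ VQd, 1 + v ⬝ᵥ u = 0 ∨ 1 + v ⬝ᵥ u = ε)
    -- `ι` is the pseudo-index `ι_Q`
    (ι : ℝ) (hι : IsLeast (iotaSet VQ VQd) ι)
    -- some facet of `Q` has vertex set which is not a `ℤ`-basis of `ℤ^n`: its `ℤ`-span is
    -- not the standard lattice (the `ℤ`-span of the standard basis of `ℝ^n`)
    (hbad : ∃ v ∈ VQd,
      Submodule.span ℤ ((VQ.filter fun u => v ⬝ᵥ u = -1 : Finset (Fin n → ℝ)) :
          Set (Fin n → ℝ)) ≠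
        Submodule.span ℤ (Set.range fun i => (Pi.single i 1 : Fin n → ℝ))) :
    ι < ε :=
  condition1'_not_locally_factorial_implies_iota_lt_eps_general VQ VQd h0 hVQd hsimp hrefl ε hcond ι
    hι hbad
end
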